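/- arXiv:1511.04644 — 2 statements merged into one kernel-verified Lean document; each statement's English description precedes it below -/
import Mathlib

section
/- Let u(x,y) = (x²+y²)²/4 − (x²+y²)^{3/2} + (x²+y²). Then u is not a convex function on the disk B₂(0) = {(x,y) : x²+y² < 4}, even though u is positive on B₂(0) \ {0}. -/
/-! In terms of `r = |p|` we have `u = r² (r/2 - 1)²`, which is positive for `0 < r < 2` but has
a local maximum at `r = 1`: on the segment from `(1/2, 0)` to `(3/2, 0)` the midpoint value
`u(1, 0) = 1/4` exceeds the endpoint values `u(1/2, 0) = u(3/2, 0) = 9/64`. -/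

open Real Set
noncomputable section

/-- Partial derivative in the first variable. -/
def pdx (u : ℝ × ℝ → ℝ) (p : ℝ × ℝ) : ℝ := deriv (fun x => u (x, p.2)) p.1
/-- Partial derivative in the second variable. -/
def pdy (u : ℝ × ℝ → ℝ) (p : ℝ × ℝ) : ℝ := deriv (fun y => u (p.1, y)) p.2
/-- Laplacian on ℝ². -/
def lap2 (u : ℝ × ℝ → ℝ) (p : ℝ × ℝ) : ℝ := pdx (pdx u) p + pdy (pdy u) p
/-- Gradient on ℝ². -/
def grad2 (u : ℝ × ℝ → ℝ) (p : ℝ × ℝ) : ℝ × ℝ := (pdx u p, pdy u p)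

/-- The counterexample function u(x,y) = (x²+y²)²/4 − (x²+y²)^{3/2} + (x²+y²). -/
def uex (p : ℝ × ℝ) : ℝ :=
  (p.1 ^ 2 + p.2 ^ 2) ^ 2 / 4 - (p.1 ^ 2 + p.2 ^ 2) ^ ((3 : ℝ) / 2) + (p.1 ^ 2 + p.2 ^ 2)

lemma Real.rpow_three_halves {x : ℝ} (hx : 0 ≤ x) : x ^ ((3 : ℝ) / 2) = x * √x := by
  rw [show (3 : ℝ) / 2 = 1 + 1 / 2 by norm_num, rpow_add' hx (by norm_num), rpow_one,
    sqrt_eq_rpow]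

lemma uex_eq (p : ℝ × ℝ) :
    uex p = (p.1 ^ 2 + p.2 ^ 2) * (√(p.1 ^ 2 + p.2 ^ 2) / 2 - 1) ^ 2 := by
  have hs : 0 ≤ p.1 ^ 2 + p.2 ^ 2 := by positivity
  rw [uex, rpow_three_halves hs]
  linear_combination -(p.1 ^ 2 + p.2 ^ 2) / 4 * sq_sqrt hs

lemma uex_mk_zero {a : ℝ} (ha : 0 ≤ a) : uex (a, 0) = a ^ 2 * (a / 2 - 1) ^ 2 := by
  simp [uex_eq, sqrt_sq ha]

lemma uex_pos {p : ℝ × ℝ} (hp : p.1 ^ 2 + p.2 ^ 2 < 4) (hp0 : p ≠ 0) : 0 < uex p := by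
  have hs : 0 < p.1 ^ 2 + p.2 ^ 2 := by
    have : p.1 ≠ 0 ∨ p.2 ≠ 0 := by
      rw [← not_and_or]; exact fun h => hp0 (Prod.ext h.1 h.2)
    rcases this with h | h <;> positivity
  have hr : √(p.1 ^ 2 + p.2 ^ 2) < 2 := by
    rw [sqrt_lt' two_pos]; linarith
  rw [uex_eq]
  exact mul_pos hs (sq_pos_of_neg (by linarith))

/-- u is positive on B₂(0) \ {0} but not convex on B₂(0). -/
theorem stmt3 :
    (∀ p ∈ {q : ℝ × ℝ | q.1 ^ 2 + q.2 ^ 2 < 4}, p ≠ 0 → 0 < uex p) ∧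
      ¬ ConvexOn ℝ {q : ℝ × ℝ | q.1 ^ 2 + q.2 ^ 2 < 4} uex := by
  refine ⟨fun p hp hp0 => uex_pos hp hp0, fun hconv => ?_⟩
  have hmid := hconv.2 (show ((1 / 2 : ℝ), (0 : ℝ)) ∈ _ by norm_num)
    (show ((3 / 2 : ℝ), (0 : ℝ)) ∈ _ by norm_num) (by norm_num : (0 : ℝ) ≤ 1 / 2)
    (by norm_num : (0 : ℝ) ≤ 1 / 2) (by norm_num)
  have hpt : (1 / 2 : ℝ) • ((1 / 2 : ℝ), (0 : ℝ)) + (1 / 2 : ℝ) • ((3 / 2 : ℝ), (0 : ℝ)) =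
      ((1 : ℝ), (0 : ℝ)) := by
    norm_num [Prod.ext_iff]
  rw [hpt, uex_mk_zero zero_le_one, uex_mk_zero (by norm_num), uex_mk_zero (by norm_num)] at hmid
  norm_num at hmid
end
end

section
/- (Proposition 4) Let D ⊆ ℝⁿ be open, u ∈ C²(D) satisfy −Δu = f(u) on D for a continuous f: ℝ → ℝ, and let p ∈ D be an isolated local maximum of u in the sense that for every sufficiently small δ > 0 and all x ∈ B_δ(p) \ {p}, ∇u(x)·(x−p) < 0. Then f(u(p)) ≥ 0. -/
/-!
Along a line `t ↦ p + t • v`, the directional derivative `∂ᵥu (p + t • v)` has the sign of `-t`,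
so it vanishes at `t = 0` and its derivative `∂ᵥ²u p` is nonpositive. Summing over the coordinate
directions gives `Δu p ≤ 0`, that is `f (u p) ≥ 0`.
-/

open MeasureTheory Real Set
open scoped RealInnerProductSpace
noncomputable section

/-- Laplacian on Euclidean space: trace of the second derivative. -/
def lapE {n : ℕ} (u : EuclideanSpace ℝ (Fin n) → ℝ) (x : EuclideanSpace ℝ (Fin n)) : ℝ :=
  ∑ i, iteratedFDeriv ℝ 2 u x
    ![(EuclideanSpace.basisFun (Fin n) ℝ) i, (EuclideanSpace.basisFun (Fin n) ℝ) i]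

abbrev E2 := EuclideanSpace ℝ (Fin 2)

open Filter Topology

theorem HasDerivAt.nonpos_of_eventually_sub_mul_nonpos {h : ℝ → ℝ} {q a : ℝ}
    (hh : HasDerivAt h q a) (hsign : ∀ᶠ t in 𝓝[≠] a, (t - a) * h t ≤ 0) : q ≤ 0 := by
  have hright : ∀ᶠ t in 𝓝[>] a, h t ≤ 0 := by
    filter_upwards [nhdsWithin_mono a (fun t (ht : a < t) => ht.ne') hsign,
      self_mem_nhdsWithin] with t ht (hat : a < t)
    exact nonpos_of_mul_nonpos_right ht (sub_pos.mpr hat)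
  have hleft : ∀ᶠ t in 𝓝[<] a, 0 ≤ h t := by
    filter_upwards [nhdsWithin_mono a (fun t (ht : t < a) => ht.ne) hsign,
      self_mem_nhdsWithin] with t ht (hta : t < a)
    exact nonneg_of_mul_nonpos_right ht (sub_neg.mpr hta)
  have hcont := hh.continuousAt.tendsto
  have ha : h a = 0 := le_antisymm
    (le_of_tendsto (hcont.mono_left nhdsWithin_le_nhds) hright)
    (ge_of_tendsto (hcont.mono_left nhdsWithin_le_nhds) hleft)
  refine le_of_tendsto (hasDerivAt_iff_tendsto_slope.mp hh) ?_
  filter_upwards [hsign, self_mem_nhdsWithin] with t ht (hta : t ≠ a)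
  have hne : t - a ≠ 0 := sub_ne_zero.mpr hta
  calc slope h a t = (t - a) * h t / (t - a) ^ 2 := by
        rw [slope_def_field, ha, sub_zero]; field_simp
    _ ≤ 0 := div_nonpos_of_nonpos_of_nonneg ht (sq_nonneg _)

section SecondDerivative

variable {E : Type*} [NormedAddCommGroup E]

theorem ContDiffAt.hasDerivAt_fderiv_add_smul_apply [NormedSpace ℝ E] {F : Type*}
    [NormedAddCommGroup F] [NormedSpace ℝ F] {u : E → F} {p : E} (hu : ContDiffAt ℝ 2 u p)
    (v : E) :
    HasDerivAt (fun t : ℝ => fderiv ℝ u (p + t • v) v) (iteratedFDeriv ℝ 2 u p ![v, v]) 0 := by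
  have hline : HasDerivAt (fun t : ℝ => p + t • v) v 0 := by
    simpa using ((hasDerivAt_id (0 : ℝ)).smul_const v).const_add p
  have hDu : HasFDerivAt (fderiv ℝ u) (fderiv ℝ (fderiv ℝ u) p) (p + (0 : ℝ) • v) := by
    rw [zero_smul, add_zero]
    exact ((hu.fderiv_right le_rfl).differentiableAt one_ne_zero).hasFDerivAt
  rw [iteratedFDeriv_two_apply]
  exact (ContinuousLinearMap.apply ℝ F v).hasFDerivAt.comp_hasDerivAt 0
    (hDu.comp_hasDerivAt 0 hline)

theorem ContDiffAt.iteratedFDeriv_two_apply_self_nonpos [InnerProductSpace ℝ E] [CompleteSpace E]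
    {u : E → ℝ} {p : E} (hu : ContDiffAt ℝ 2 u p)
    (hgrad : ∀ᶠ x in 𝓝[≠] p, ⟪gradient u x, x - p⟫ ≤ 0) (v : E) :
    iteratedFDeriv ℝ 2 u p ![v, v] ≤ 0 := by
  rcases eq_or_ne v 0 with rfl | hv
  · exact le_of_eq (ContinuousMultilinearMap.map_coord_zero _ 0 rfl)
  have hline : Tendsto (fun t : ℝ => p + t • v) (𝓝[≠] 0) (𝓝[≠] p) := by
    refine tendsto_nhdsWithin_of_tendsto_nhds_of_eventually_within _ ?_ ?_
    · exact ((continuous_const.add (continuous_id.smul continuous_const)).tendsto' 0 p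
        (by simp)).mono_left nhdsWithin_le_nhds
    · filter_upwards [self_mem_nhdsWithin] with t (ht : t ≠ 0)
      simpa [hv] using ht
  refine (hu.hasDerivAt_fderiv_add_smul_apply v).nonpos_of_eventually_sub_mul_nonpos ?_
  filter_upwards [hline.eventually hgrad] with t ht
  simpa [inner_gradient_left, real_inner_smul_right] using ht

end SecondDerivative

theorem stmt5_general {n : ℕ} (D : Set (EuclideanSpace ℝ (Fin n))) (hD : IsOpen D)
    (u : EuclideanSpace ℝ (Fin n) → ℝ) (hu : ContDiffOn ℝ 2 u D)
    (f : ℝ → ℝ)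
    (hpde : ∀ x ∈ D, -(lapE u x) = f (u x))
    (p : EuclideanSpace ℝ (Fin n)) (hp : p ∈ D)
    (hmax : ∃ δ > 0, Metric.ball p δ ⊆ D ∧
      ∀ x ∈ Metric.ball p δ, x ≠ p → ⟪gradient u x, x - p⟫ < 0) :
    0 ≤ f (u p) := by
  obtain ⟨δ, hδ, -, hneg⟩ := hmax
  have hgrad : ∀ᶠ x in 𝓝[≠] p, ⟪gradient u x, x - p⟫ ≤ 0 := by
    filter_upwards [nhdsWithin_le_nhds (Metric.ball_mem_nhds p hδ), self_mem_nhdsWithin]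
      with x hx hxp using (hneg x hx hxp).le
  have hlap : lapE u p ≤ 0 := Finset.sum_nonpos fun i _ =>
    (hu.contDiffAt (hD.mem_nhds hp)).iteratedFDeriv_two_apply_self_nonpos hgrad _
  linarith [hpde p hp]

/-- Proposition 4: at an isolated local maximum p (in the sense that
∇u·(x−p) < 0 near p), one has f(u(p)) ≥ 0. -/
theorem stmt5 {n : ℕ} (D : Set (EuclideanSpace ℝ (Fin n))) (hD : IsOpen D)
    (u : EuclideanSpace ℝ (Fin n) → ℝ) (hu : ContDiffOn ℝ 2 u D)
    (f : ℝ → ℝ) (hf : Continuous f)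
    (hpde : ∀ x ∈ D, -(lapE u x) = f (u x))
    (p : EuclideanSpace ℝ (Fin n)) (hp : p ∈ D)
    (hmax : ∃ δ > 0, Metric.ball p δ ⊆ D ∧
      ∀ x ∈ Metric.ball p δ, x ≠ p → ⟪gradient u x, x - p⟫ < 0) :
    0 ≤ f (u p) :=
  stmt5_general D hD u hu f hpde p hp hmax
end
end
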